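/- For all real x and y, the family ((m,n) ↦ (−1)^n·H_{m,n}(x)·y^{m+n}/(m!·n!)) indexed by ℕ × ℕ is summable, and its sum equals e^{x·y}. -/

import Mathlib

open Polynomial Finset

/-- The operator `A p = 2·X·p − p′`. -/
noncomputable def A (p : ℝ[X]) : ℝ[X] := 2 * X * p - derivative p

/-- The two-index Hermite polynomial `H_{m,n} = A^m (X^n)`. -/
noncomputable def H (m n : ℕ) : ℝ[X] := A^[m] (X ^ n)

/-! The commutation relation `A (X p) = X (A p) - p` gives
`A^m (X p) = X (A^m p) - m A^(m-1) p`. Together with Pascal's rule this shows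
`∑_{m+n=N} C(N,m) (-1)^n H_{m,n} = X^N`, so the antidiagonal sums of the series are
`(xy)^N / N!`, the terms of the exponential series. The same relation yields the derivative-free
recursions `H_{m,n+1} = X H_{m,n} - m H_{m-1,n}` and `H_{m+1,0} = 2X H_{m,0} - 2m H_{m-1,0}`,
from which `|H_{m,n}(x)| ≤ (2|x|+2)^(m+n) ⌊(m+n)/2⌋!`; this growth is beaten by `m! n!`,
which makes the double series absolutely summable. -/

open scoped Nat

section Antidiagonal

variable {M : Type*} [AddCommMonoid M] [HasAntidiagonal M]

theorem HasSum.sum_antidiagonal {α : Type*} [AddCommMonoid α] [TopologicalSpace α]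
    [ContinuousAdd α] [RegularSpace α] {f : M × M → α} {a : α} (hf : HasSum f a) :
    HasSum (fun n => ∑ p ∈ antidiagonal n, f p) a :=
  (HasAntidiagonal.sigmaAntidiagonalEquivProd.hasSum_iff.2 hf).sigma fun n =>
    (antidiagonal n).hasSum f

theorem summable_of_nonneg_of_summable_sum_antidiagonal {f : M × M → ℝ} (hf : 0 ≤ f)
    (h : Summable fun n => ∑ p ∈ antidiagonal n, f p) : Summable f := by
  refine HasAntidiagonal.sigmaAntidiagonalEquivProd.summable_iff.1
    ((summable_sigma_of_nonneg fun _ => hf _).2 ⟨fun _ => Summable.of_finite, ?_⟩)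
  simpa [Finset.tsum_subtype, Finset.sum_attach] using h

end Antidiagonal

theorem Finset.Nat.sum_antidiagonal_choose_mul_nsmul_pred {M : Type*} [AddCommMonoid M]
    (f : ℕ → ℕ → M) (N : ℕ) :
    ∑ p ∈ antidiagonal N, (N.choose p.1 * p.1) • f (p.1 - 1) p.2 =
      N • ∑ p ∈ antidiagonal (N - 1), (N - 1).choose p.1 • f p.1 p.2 := by
  cases N with
  | zero => simp
  | succ N =>
    rw [Nat.sum_antidiagonal_succ, Nat.add_sub_cancel, smul_sum]
    simp only [mul_zero, zero_smul, zero_add, Nat.add_sub_cancel, mul_smul]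
    refine sum_congr rfl fun p _ => ?_
    rw [← mul_smul, ← mul_smul, ← Nat.add_one_mul_choose_eq]

theorem sum_antidiagonal_inv_factorial_mul_factorial (N : ℕ) :
    ∑ p ∈ antidiagonal N, ((p.1 ! : ℝ) * p.2 !)⁻¹ = 2 ^ N / N ! := by
  have h : ∀ p ∈ antidiagonal N, ((p.1 ! : ℝ) * p.2 !)⁻¹ = N.choose p.1 / N ! := by
    intro p hp
    rw [← mem_antidiagonal.1 hp, Nat.cast_add_choose]
    field_simp
  rw [sum_congr rfl h, ← sum_div, Nat.sum_antidiagonal_eq_sum_range_succ_mk]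
  exact_mod_cast congrArg (fun k : ℕ => (k : ℝ) / N !) (Nat.sum_range_choose N)

theorem factorial_half_mul_factorial_half_le (N : ℕ) : (N / 2)! * (N / 2)! ≤ N ! :=
  calc (N / 2)! * (N / 2)! ≤ (N / 2)! * (N - N / 2)! := by gcongr; omega
    _ ≤ N ! := Nat.le_of_dvd N.factorial_pos (Nat.factorial_mul_factorial_dvd_factorial (by omega))

theorem summable_pow_div_factorial_half (c : ℝ) : Summable fun n : ℕ => c ^ n / (n / 2)! := by
  have h := Real.summable_pow_div_factorial (c ^ 2)
  apply Summable.even_add_odd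
  · refine h.congr fun k => ?_
    rw [pow_mul, Nat.mul_div_cancel_left k two_pos]
  · refine (h.mul_left c).congr fun k => ?_
    rw [show (2 * k + 1) / 2 = k by omega]
    ring

noncomputable def linA : Module.End ℝ ℝ[X] := LinearMap.mulLeft ℝ (2 * X) - derivative

theorem coe_linA : ⇑linA = A := rfl

theorem linA_pow_succ_apply (m : ℕ) (p : ℝ[X]) : (linA ^ (m + 1)) p = linA ((linA ^ m) p) := by
  rw [pow_succ', Module.End.mul_apply]

theorem H_eq_linA_pow_apply (m n : ℕ) : H m n = (linA ^ m) (X ^ n) := by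
  rw [H, Module.End.coe_pow, coe_linA]

theorem A_X_mul (p : ℝ[X]) : A (X * p) = X * A p - p := by
  simp only [A, derivative_mul, derivative_X, one_mul]
  ring

theorem linA_pow_X_mul (m : ℕ) (p : ℝ[X]) :
    (linA ^ m) (X * p) = X * (linA ^ m) p - m • (linA ^ (m - 1)) p := by
  induction m with
  | zero => simp
  | succ m ih =>
    rw [linA_pow_succ_apply, ih, map_sub, map_nsmul, coe_linA, A_X_mul, ← coe_linA,
      ← linA_pow_succ_apply, Nat.add_sub_cancel]
    cases m with
    | zero => simp
    | succ m => rw [Nat.add_sub_cancel, ← linA_pow_succ_apply]; module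

theorem H_succ_left (m n : ℕ) : H (m + 1) n = A (H m n) :=
  Function.iterate_succ_apply' A m (X ^ n)

theorem H_succ_right (m n : ℕ) : H m (n + 1) = X * H m n - m • H (m - 1) n := by
  simp only [H_eq_linA_pow_apply, pow_succ', linA_pow_X_mul]

theorem H_succ_zero (m : ℕ) : H (m + 1) 0 = (2 : ℝ) • (X * H m 0 - m • H (m - 1) 0) := by
  have h : linA 1 = (2 : ℝ) • (X * 1) := by
    rw [coe_linA, A, derivative_one, smul_eq_C_mul, C_ofNat]; ring
  simp only [H_eq_linA_pow_apply, pow_zero, pow_succ, Module.End.mul_apply, h, map_smul,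
    linA_pow_X_mul]

noncomputable def binomialH (N : ℕ) : ℝ[X] :=
  ∑ p ∈ antidiagonal N, N.choose p.1 • (-1 : ℝ) ^ p.2 • H p.1 p.2

theorem binomialH_succ (N : ℕ) :
    binomialH (N + 1) = A (binomialH N) - X * binomialH N + N • binomialH (N - 1) := by
  have hA : A (binomialH N) =
      ∑ p ∈ antidiagonal N, N.choose p.2 • (-1 : ℝ) ^ p.2 • H (p.1 + 1) p.2 := by
    rw [binomialH, ← coe_linA, map_sum]
    refine sum_congr rfl fun p hp => ?_
    rw [map_nsmul, map_smul, coe_linA, ← H_succ_left,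
      Nat.choose_symm_of_eq_add (mem_antidiagonal.1 hp).symm]
  have hX : ∑ p ∈ antidiagonal N, N.choose p.1 • (-1 : ℝ) ^ (p.2 + 1) • H p.1 (p.2 + 1) =
      -(X * binomialH N) +
        ∑ p ∈ antidiagonal N, (N.choose p.1 * p.1) • (-1 : ℝ) ^ p.2 • H (p.1 - 1) p.2 := by
    rw [binomialH, mul_sum, ← sum_neg_distrib, ← sum_add_distrib]
    refine sum_congr rfl fun p _ => ?_
    rw [H_succ_right, mul_smul_comm, mul_smul_comm]
    module
  rw [binomialH, sum_antidiagonal_choose_succ_nsmul (fun m n => (-1 : ℝ) ^ n • H m n), hX, hA,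
    Nat.sum_antidiagonal_choose_mul_nsmul_pred (fun m n => (-1 : ℝ) ^ n • H m n), ← binomialH]
  abel

theorem binomialH_eq (N : ℕ) : binomialH N = X ^ N := by
  induction N using Nat.strong_induction_on with
  | _ N ih =>
    cases N with
    | zero => simp [binomialH, H]
    | succ N =>
      rw [binomialH_succ, ih N (by omega), ih (N - 1) (by omega), A, derivative_X_pow,
        map_natCast, nsmul_eq_mul]
      ring

noncomputable def hermiteMajorant (r : ℝ) (N : ℕ) : ℝ := (2 * r + 2) ^ N * (N / 2)!

theorem hermiteMajorant_nonneg {r : ℝ} (hr : 0 ≤ r) (N : ℕ) : 0 ≤ hermiteMajorant r N := by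
  unfold hermiteMajorant; positivity

theorem hermiteMajorant_step {r : ℝ} (hr : 0 ≤ r) (N : ℕ) :
    2 * r * hermiteMajorant r N + 2 * N * hermiteMajorant r (N - 1) ≤
      hermiteMajorant r (N + 1) := by
  cases N with
  | zero => simp [hermiteMajorant]
  | succ k =>
    simp only [hermiteMajorant, Nat.add_sub_cancel]
    set K := 2 * r + 2
    have hmono : (((k + 1) / 2)! : ℝ) ≤ ((k + 1 + 1) / 2)! := by
      exact_mod_cast Nat.factorial_le (by omega)
    have hhalf : 2 * ((k + 1 : ℕ) : ℝ) * (k / 2)! ≤ 4 * ((k + 1 + 1) / 2)! := by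
      rw [show (k + 1 + 1) / 2 = k / 2 + 1 by omega, Nat.factorial_succ]
      have hk : ((k + 1 : ℕ) : ℝ) ≤ 2 * ((k / 2 : ℕ) + 1) := by exact_mod_cast (by omega)
      have : (0 : ℝ) ≤ (k / 2)! := by positivity
      push_cast at hk ⊢
      nlinarith
    have hK : 0 ≤ K ^ k := by positivity
    calc 2 * r * (K ^ (k + 1) * ((k + 1) / 2)!) + 2 * ((k + 1 : ℕ) : ℝ) * (K ^ k * (k / 2)!)
        ≤ 2 * r * (K ^ (k + 1) * ((k + 1 + 1) / 2)!) + K ^ k * (4 * ((k + 1 + 1) / 2)!) := by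
          have : 2 * r * (K ^ (k + 1) * ((k + 1) / 2)!) ≤
              2 * r * (K ^ (k + 1) * ((k + 1 + 1) / 2)!) := by gcongr
          nlinarith [mul_le_mul_of_nonneg_left hhalf hK]
      _ = K ^ k * ((k + 1 + 1) / 2)! * (2 * r * K + 4) := by ring
      _ ≤ K ^ k * ((k + 1 + 1) / 2)! * K ^ 2 := by gcongr; nlinarith
      _ = K ^ (k + 1 + 1) * ((k + 1 + 1) / 2)! := by ring

theorem abs_eval_H_le (x : ℝ) (m n : ℕ) : |(H m n).eval x| ≤ hermiteMajorant |x| (m + n) := by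
  have hr := abs_nonneg x
  induction n generalizing m with
  | zero =>
    rw [add_zero]
    induction m using Nat.strong_induction_on with
    | _ m ih =>
      cases m with
      | zero => simp [H, hermiteMajorant]
      | succ m =>
        have h1 := ih m (by omega)
        have h2 := ih (m - 1) (by omega)
        rw [H_succ_zero, eval_smul, eval_sub, eval_mul, eval_X, eval_smul, smul_eq_mul,
          nsmul_eq_mul, abs_mul, abs_two]
        calc 2 * |x * eval x (H m 0) - m * eval x (H (m - 1) 0)|
            ≤ 2 * (|x| * hermiteMajorant |x| m + m * hermiteMajorant |x| (m - 1)) := by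
              gcongr
              refine (abs_sub _ _).trans (add_le_add ?_ ?_)
              · rw [abs_mul]; gcongr
              · rw [abs_mul, Nat.abs_cast]; gcongr
          _ ≤ hermiteMajorant |x| (m + 1) := by linarith [hermiteMajorant_step hr m]
  | succ n ih =>
    have h1 := ih m
    have h2 := ih (m - 1)
    have hpred : (m : ℝ) * hermiteMajorant |x| (m - 1 + n) ≤
        ((m + n : ℕ) : ℝ) * hermiteMajorant |x| (m + n - 1) := by
      cases m with
      | zero => simpa using mul_nonneg (Nat.cast_nonneg n) (hermiteMajorant_nonneg hr _)
      | succ m =>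
        rw [show m + 1 - 1 + n = m + 1 + n - 1 by omega]
        exact mul_le_mul_of_nonneg_right (by exact_mod_cast (by omega))
          (hermiteMajorant_nonneg hr _)
    rw [H_succ_right, eval_sub, eval_mul, eval_X, eval_smul, nsmul_eq_mul, ← add_assoc]
    calc |x * eval x (H m n) - m * eval x (H (m - 1) n)|
        ≤ |x| * hermiteMajorant |x| (m + n) + m * hermiteMajorant |x| (m - 1 + n) := by
          refine (abs_sub _ _).trans (add_le_add ?_ ?_)
          · rw [abs_mul]; gcongr
          · rw [abs_mul, Nat.abs_cast]; gcongr
      _ ≤ hermiteMajorant |x| (m + n + 1) := by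
          have hx : 0 ≤ |x| * hermiteMajorant |x| (m + n) :=
            mul_nonneg hr (hermiteMajorant_nonneg hr _)
          have hN : 0 ≤ ((m + n : ℕ) : ℝ) * hermiteMajorant |x| (m + n - 1) :=
            mul_nonneg (Nat.cast_nonneg _) (hermiteMajorant_nonneg hr _)
          linarith [hermiteMajorant_step hr (m + n)]

theorem summable_hermiteMajorant_mul_pow_div_factorial {r : ℝ} (hr : 0 ≤ r) {c : ℝ}
    (hc : 0 ≤ c) : Summable fun N => hermiteMajorant r N * c ^ N / N ! := by
  refine (summable_pow_div_factorial_half ((2 * r + 2) * c)).of_nonneg_of_le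
    (fun N => by have := hermiteMajorant_nonneg hr N; positivity) fun N => ?_
  have hfac : ((N / 2)! : ℝ) * (N / 2)! ≤ N ! := by
    exact_mod_cast factorial_half_mul_factorial_half_le N
  rw [hermiteMajorant, div_le_div_iff₀ (by positivity) (by positivity), mul_pow]
  calc (2 * r + 2) ^ N * (N / 2)! * c ^ N * (N / 2)!
      = (2 * r + 2) ^ N * c ^ N * ((N / 2)! * (N / 2)!) := by ring
    _ ≤ (2 * r + 2) ^ N * c ^ N * N ! := by gcongr

noncomputable def expTerm (x y : ℝ) (p : ℕ × ℕ) : ℝ :=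
  (-1) ^ p.2 * (H p.1 p.2).eval x * y ^ (p.1 + p.2) / (p.1 ! * p.2 !)

theorem sum_antidiagonal_expTerm (x y : ℝ) (N : ℕ) :
    ∑ p ∈ antidiagonal N, expTerm x y p = (x * y) ^ N / N ! := by
  have h : ∀ p ∈ antidiagonal N,
      expTerm x y p = y ^ N / N ! * (N.choose p.1 • (-1 : ℝ) ^ p.2 • H p.1 p.2).eval x := by
    intro p hp
    rw [← mem_antidiagonal.1 hp, expTerm, eval_smul, eval_smul, nsmul_eq_mul, smul_eq_mul,
      Nat.cast_add_choose]
    field_simp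
  rw [sum_congr rfl h, ← mul_sum, ← eval_finsetSum, ← binomialH, binomialH_eq, eval_pow, eval_X]
  ring

theorem abs_expTerm_le (x y : ℝ) (p : ℕ × ℕ) :
    |expTerm x y p| ≤
      hermiteMajorant |x| (p.1 + p.2) * |y| ^ (p.1 + p.2) * ((p.1 ! : ℝ) * p.2 !)⁻¹ := by
  rw [expTerm, abs_div, abs_mul, abs_mul, abs_pow, abs_pow, abs_neg, abs_one, one_pow, one_mul,
    abs_of_pos (by positivity : (0 : ℝ) < p.1 ! * p.2 !), div_eq_mul_inv]
  gcongr
  exact abs_eval_H_le x p.1 p.2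

theorem summable_expTerm (x y : ℝ) : Summable (expTerm x y) := by
  refine Summable.of_norm_bounded ?_ (abs_expTerm_le x y)
  refine summable_of_nonneg_of_summable_sum_antidiagonal
    (fun p => by have := hermiteMajorant_nonneg (abs_nonneg x) (p.1 + p.2); positivity) ?_
  refine (summable_hermiteMajorant_mul_pow_div_factorial (abs_nonneg x)
    (by positivity : 0 ≤ 2 * |y|)).congr fun N => ?_
  rw [← Nat.sum_antidiagonal_subst (f := fun p N => hermiteMajorant |x| N * |y| ^ N *
    ((p.1 ! : ℝ) * p.2 !)⁻¹), ← mul_sum, sum_antidiagonal_inv_factorial_mul_factorial, mul_pow]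
  ring

theorem hasSum_expTerm (x y : ℝ) : HasSum (expTerm x y) (Real.exp (x * y)) := by
  have hs := (summable_expTerm x y).hasSum
  have hexp : HasSum (fun N => (x * y) ^ N / N !) (Real.exp (x * y)) := by
    rw [Real.exp_eq_exp_ℝ]; exact NormedSpace.expSeries_div_hasSum_exp (x * y)
  have hdiag := hs.sum_antidiagonal
  simp only [sum_antidiagonal_expTerm] at hdiag
  rwa [hdiag.unique hexp] at hs

theorem hmn_exp_expansion (x y : ℝ) :
    Summable (fun p : ℕ × ℕ =>
      (-1 : ℝ) ^ p.2 * (H p.1 p.2).eval x * y ^ (p.1 + p.2) /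
        ((p.1.factorial : ℝ) * (p.2.factorial : ℝ))) ∧
    ∑' p : ℕ × ℕ,
      (-1 : ℝ) ^ p.2 * (H p.1 p.2).eval x * y ^ (p.1 + p.2) /
        ((p.1.factorial : ℝ) * (p.2.factorial : ℝ)) =
      Real.exp (x * y) :=
  ⟨(hasSum_expTerm x y).summable, (hasSum_expTerm x y).tsum_eq⟩
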